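/- Let N ∈ ℕ, W ∈ (0, 1/2), R ≤ N − 2⌊NW⌋ − 1, and let V ∈ ℂ^{(N−2⌊NW⌋−1)×R} have orthonormal columns. Then for Q = [F_{N,W} F̄_{N,W} V], the representation residual satisfies ∫_{−W}^{W} ‖e_f − QQ*e_f‖₂² df = trace(F̄_{N,W}* B_{N,W} F̄_{N,W} − V V* F̄_{N,W}* B_{N,W} F̄_{N,W}). -/

import Mathlib

open Matrix MeasureTheory
open scoped Real

noncomputable section

/-- The prolate matrix `B_{N,W}`. -/
def prolateR (N : ℕ) (W : ℝ) : Matrix (Fin N) (Fin N) ℝ :=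
  Matrix.of fun m n : Fin N =>
    if m = n then 2 * W
    else Real.sin (2 * Real.pi * W * (((m : ℕ) : ℝ) - ((n : ℕ) : ℝ))) /
      (Real.pi * (((m : ℕ) : ℝ) - ((n : ℕ) : ℝ)))

def prolateC (N : ℕ) (W : ℝ) : Matrix (Fin N) (Fin N) ℂ :=
  (prolateR N W).map (fun x => (x : ℂ))

/-- sampled complex exponential `e_f`. -/
def eVec (N : ℕ) (f : ℝ) : Fin N → ℂ :=
  fun n => Complex.exp (2 * (Real.pi : ℂ) * (f : ℂ) * ((n : ℕ) : ℂ) * Complex.I)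

/-- partial DFT matrix with columns `(1/√N) e_{k/N}`, `|k| ≤ m`. -/
def Fmat (N m : ℕ) : Matrix (Fin N) (Fin (2 * m + 1)) ℂ :=
  Matrix.of fun n i =>
    ((1 / Real.sqrt N : ℝ) : ℂ) *
      Complex.exp (2 * (Real.pi : ℂ) * Complex.I * ((((i : ℕ) : ℤ) - (m : ℤ) : ℤ) : ℂ) *
        ((n : ℕ) : ℂ) / (N : ℂ))

/-- remaining (high-frequency) DFT columns, frequencies `k/N` with `k = m+1, …, N−m−1`. -/
def Fbar (N m : ℕ) : Matrix (Fin N) (Fin (N - (2 * m + 1))) ℂ :=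
  Matrix.of fun n j =>
    ((1 / Real.sqrt N : ℝ) : ℂ) *
      Complex.exp (2 * (Real.pi : ℂ) * Complex.I * (((j : ℕ) + m + 1 : ℕ) : ℂ) *
        ((n : ℕ) : ℂ) / (N : ℂ))

/-- squared residual `‖e_f − P e_f‖₂²`. -/
def residP {N : ℕ} (P : Matrix (Fin N) (Fin N) ℂ) (f : ℝ) : ℝ :=
  ∑ n, ‖(eVec N f - P.mulVec (eVec N f)) n‖ ^ 2

/-! The `N` columns of `[F_{N,W} F̄_{N,W}]` are DFT vectors whose integer frequencies lie in a
window of length `N`, hence are orthonormal, so this square matrix is unitary. Consequently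
`1 - QQ* = F̄ (1 - VV*) F̄*` is an orthogonal projection `M`, and `‖M e‖² = trace (M e e*)`.
Integrating `e_f e_f*` over `[-W, W]` gives `B_{N,W}` entrywise, and cycling the trace of
`F̄ (1 - VV*) F̄* B` yields the right-hand side. -/

lemma sum_exp_two_pi_mul_I_mul_div (N : ℕ) (hN : 0 < N) (c : ℤ) :
    ∑ n : Fin N, Complex.exp (2 * π * Complex.I * c * (n : ℕ) / N) =
      if (N : ℤ) ∣ c then (N : ℂ) else 0 := by
  set z := Complex.exp (2 * π * Complex.I * c / N)
  have hpow : ∀ n : ℕ, Complex.exp (2 * π * Complex.I * c * n / N) = z ^ n := fun n => by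
    rw [← Complex.exp_nat_mul]; ring_nf
  have hN' : (N : ℂ) ≠ 0 := by exact_mod_cast hN.ne'
  have hz1 : z = 1 ↔ (N : ℤ) ∣ c := by
    rw [Complex.exp_eq_one_iff]
    refine ⟨fun ⟨k, hk⟩ => ⟨k, ?_⟩, fun ⟨k, hk⟩ => ⟨k, ?_⟩⟩
    · field_simp at hk
      exact_mod_cast hk
    · rw [hk]; push_cast; field_simp
  simp_rw [hpow, Fin.sum_univ_eq_sum_range (z ^ ·)]
  split_ifs with h
  · simp [hz1.mpr h]
  · have hzN : z ^ N = 1 := by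
      rw [← Complex.exp_nat_mul, Complex.exp_eq_one_iff]
      exact ⟨c, by field_simp⟩
    rw [geom_sum_eq (mt hz1.mp h), hzN, sub_self, zero_div]

def dftVec (N : ℕ) (k : ℤ) (n : Fin N) : ℂ :=
  ((1 / Real.sqrt N : ℝ) : ℂ) * Complex.exp (2 * π * Complex.I * k * (n : ℕ) / N)

lemma star_dftVec_mul_dftVec (N : ℕ) (a b : ℤ) (n : Fin N) :
    star (dftVec N a n) * dftVec N b n =
      Complex.exp (2 * π * Complex.I * ↑(b - a) * (n : ℕ) / N) / N := by
  have hsq : ((1 / Real.sqrt N : ℝ) : ℂ) * ((1 / Real.sqrt N : ℝ) : ℂ) = 1 / N := by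
    rw [← Complex.ofReal_mul, div_mul_div_comm, Real.mul_self_sqrt (Nat.cast_nonneg N)]
    push_cast; ring
  rw [dftVec, dftVec, star_mul', Complex.star_def, Complex.conj_ofReal,
    ← Complex.exp_conj, mul_mul_mul_comm, hsq, ← Complex.exp_add]
  simp only [map_div₀, map_mul, map_intCast, map_natCast, map_ofNat, Complex.conj_I,
    Complex.conj_ofReal]
  rw [div_mul_eq_mul_div, one_mul]
  congr 2
  push_cast; ring

lemma sum_star_dftVec_mul_dftVec (N : ℕ) (hN : 0 < N) (a b : ℤ) :
    ∑ n, star (dftVec N a n) * dftVec N b n = if (N : ℤ) ∣ b - a then 1 else 0 := by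
  have hN' : (N : ℂ) ≠ 0 := by exact_mod_cast hN.ne'
  simp_rw [star_dftVec_mul_dftVec N, ← Finset.sum_div, sum_exp_two_pi_mul_I_mul_div N hN]
  split_ifs <;> simp [hN']

lemma dftVec_orthonormal (N : ℕ) (hN : 0 < N) {lo a b : ℤ} (ha : a ∈ Set.Ico lo (lo + N))
    (hb : b ∈ Set.Ico lo (lo + N)) :
    ∑ n, star (dftVec N a n) * dftVec N b n = if a = b then 1 else 0 := by
  rw [sum_star_dftVec_mul_dftVec N hN]
  have : (N : ℤ) ∣ b - a ↔ a = b := by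
    refine ⟨fun h => ?_, fun h => h ▸ by simp⟩
    have hlt : |b - a| < N := abs_lt.mpr ⟨by linarith [ha.2, hb.1], by linarith [ha.1, hb.2]⟩
    linarith [Int.eq_zero_of_abs_lt_dvd h hlt]
  simp only [this]

def dftFreq (N m : ℕ) : Fin (2 * m + 1) ⊕ Fin (N - (2 * m + 1)) → ℤ :=
  Sum.elim (fun i => (i : ℤ) - m) (fun j => (j : ℤ) + m + 1)

lemma dftFreq_mem_Ico {N m : ℕ} (hmN : 2 * m + 1 ≤ N)
    (c : Fin (2 * m + 1) ⊕ Fin (N - (2 * m + 1))) :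
    dftFreq N m c ∈ Set.Ico (-m : ℤ) (-m + N) := by
  rcases c with i | j
  · have := i.2; simp only [dftFreq, Sum.elim_inl, Set.mem_Ico]; omega
  · have := j.2; simp only [dftFreq, Sum.elim_inr, Set.mem_Ico]; omega

lemma dftFreq_injective (N m : ℕ) : Function.Injective (dftFreq N m) := by
  rintro (i | j) (i' | j') h <;> simp only [dftFreq, Sum.elim_inl, Sum.elim_inr] at h
  · exact congrArg _ (Fin.ext (by omega))
  · omega
  · omega
  · exact congrArg _ (Fin.ext (by omega))

lemma fromCols_Fmat_Fbar (N m : ℕ) :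
    fromCols (Fmat N m) (Fbar N m) = Matrix.of fun n c => dftVec N (dftFreq N m c) n := by
  ext n (i | j) <;> simp [Fmat, Fbar, dftVec, dftFreq]

lemma conjTranspose_fromCols_Fmat_Fbar_mul_self {N m : ℕ} (hmN : 2 * m + 1 ≤ N) :
    (fromCols (Fmat N m) (Fbar N m))ᴴ * fromCols (Fmat N m) (Fbar N m) = 1 := by
  ext c c'
  simp only [fromCols_Fmat_Fbar, mul_apply, conjTranspose_apply, of_apply]
  rw [dftVec_orthonormal N (by omega) (dftFreq_mem_Ico hmN c) (dftFreq_mem_Ico hmN c'),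
    one_apply]
  simp only [(dftFreq_injective N m).eq_iff]

lemma Fmat_mul_conjTranspose_add_Fbar_mul_conjTranspose {N m : ℕ} (hmN : 2 * m + 1 ≤ N) :
    Fmat N m * (Fmat N m)ᴴ + Fbar N m * (Fbar N m)ᴴ = 1 := by
  have e : Fin N ≃ Fin (2 * m + 1) ⊕ Fin (N - (2 * m + 1)) :=
    (finCongr (by omega)).trans finSumFinEquiv.symm
  rw [← fromCols_mul_fromRows, fromCols_mul_fromRows_eq_one_comm e,
    ← conjTranspose_fromCols_eq_fromRows_conjTranspose,
    conjTranspose_fromCols_Fmat_Fbar_mul_self hmN]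

lemma Fbar_conjTranspose_mul_self {N m : ℕ} (hmN : 2 * m + 1 ≤ N) :
    (Fbar N m)ᴴ * Fbar N m = 1 := by
  have h := conjTranspose_fromCols_Fmat_Fbar_mul_self hmN
  rw [conjTranspose_fromCols_eq_fromRows_conjTranspose, fromRows_mul_fromCols,
    ← fromBlocks_one, fromBlocks_inj] at h
  exact h.2.2.2

section Projection

variable {R : Type*} [Ring R] [StarRing R] {l n₁ n₂ r : Type*} [Fintype n₂] [Fintype r]

lemma one_sub_fromCols_mul_conjTranspose [Fintype n₁] [DecidableEq l] [DecidableEq n₂]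
    {F : Matrix l n₁ R} {G : Matrix l n₂ R} (hFG : F * Fᴴ + G * Gᴴ = 1)
    (V : Matrix n₂ r R) :
    1 - fromCols F (G * V) * (fromCols F (G * V))ᴴ = G * (1 - V * Vᴴ) * Gᴴ := by
  rw [conjTranspose_fromCols_eq_fromRows_conjTranspose, fromCols_mul_fromRows, ← hFG,
    conjTranspose_mul]
  simp only [Matrix.mul_sub, Matrix.sub_mul, Matrix.mul_one, Matrix.mul_assoc]
  abel

lemma conjTranspose_mul_self_of_isometry [Fintype l] [DecidableEq n₂] [DecidableEq r]
    {G : Matrix l n₂ R} (hG : Gᴴ * G = 1) {V : Matrix n₂ r R} (hV : Vᴴ * V = 1) :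
    (G * (1 - V * Vᴴ) * Gᴴ)ᴴ * (G * (1 - V * Vᴴ) * Gᴴ) = G * (1 - V * Vᴴ) * Gᴴ := by
  have hK : (1 - V * Vᴴ) * (1 - V * Vᴴ) = 1 - V * Vᴴ := by
    simp only [Matrix.mul_sub, Matrix.sub_mul, Matrix.mul_one, Matrix.one_mul, Matrix.mul_assoc,
      ← Matrix.mul_assoc Vᴴ, hV]
    abel
  simp only [conjTranspose_mul, conjTranspose_sub, conjTranspose_one, conjTranspose_conjTranspose,
    Matrix.mul_assoc]
  rw [← Matrix.mul_assoc Gᴴ G, hG, Matrix.one_mul, ← Matrix.mul_assoc (1 - V * Vᴴ), hK]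

end Projection

lemma integral_exp_two_pi_mul_I {t : ℝ} (ht : t ≠ 0) (W : ℝ) :
    ∫ f in (-W)..W, Complex.exp (2 * π * f * t * Complex.I) =
      ((Real.sin (2 * π * W * t) / (π * t) : ℝ) : ℂ) := by
  have hc : 2 * π * t * Complex.I ≠ 0 := by simp [Real.pi_ne_zero, ht]
  simp_rw [show ∀ f : ℝ, 2 * π * (f : ℂ) * t * Complex.I = 2 * π * t * Complex.I * f from
    fun f => by ring]
  rw [integral_exp_mul_complex hc]
  push_cast
  rw [Complex.sin]
  field_simp
  ring_nf
  rw [Complex.I_sq]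
  ring

lemma eVec_mul_star_eVec (N : ℕ) (f : ℝ) (n k : Fin N) :
    eVec N f n * star (eVec N f k) =
      Complex.exp (2 * π * f * (((n : ℕ) : ℝ) - (k : ℕ) : ℝ) * Complex.I) := by
  rw [eVec, eVec, Complex.star_def, ← Complex.exp_conj, ← Complex.exp_add]
  simp only [map_mul, map_natCast, map_ofNat, Complex.conj_I, Complex.conj_ofReal]
  push_cast
  ring_nf

lemma integral_eVec_mul_star_eVec (N : ℕ) (W : ℝ) (n k : Fin N) :
    ∫ f in (-W)..W, eVec N f n * star (eVec N f k) = prolateC N W n k := by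
  simp_rw [eVec_mul_star_eVec, prolateC, prolateR, map_apply, of_apply]
  split_ifs with h
  · simp [h, two_mul]
  · exact integral_exp_two_pi_mul_I (sub_ne_zero.mpr (by exact_mod_cast Fin.val_injective.ne h)) W

lemma continuous_eVec_apply (N : ℕ) (n : Fin N) : Continuous fun f => eVec N f n := by
  unfold eVec; fun_prop

lemma integral_trace_mul_vecMulVec_eVec (N : ℕ) (W : ℝ) (A : Matrix (Fin N) (Fin N) ℂ) :
    ∫ f in (-W)..W, trace (A * vecMulVec (eVec N f) (star (eVec N f))) =
      trace (A * prolateC N W) := by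
  have hcont : ∀ i j : Fin N,
      Continuous fun f => A i j * (eVec N f j * star (eVec N f i)) := fun i j =>
    continuous_const.mul ((continuous_eVec_apply N j).mul (continuous_eVec_apply N i).star)
  simp only [trace, diag, mul_apply, vecMulVec_apply, Pi.star_apply]
  rw [intervalIntegral.integral_finsetSum fun i _ =>
    (continuous_finsetSum _ fun j _ => hcont i j).intervalIntegrable _ _]
  refine Finset.sum_congr rfl fun i _ => ?_
  rw [intervalIntegral.integral_finsetSum fun j _ => (hcont i j).intervalIntegrable _ _]
  simp_rw [intervalIntegral.integral_const_mul, integral_eVec_mul_star_eVec]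

lemma ofReal_sum_norm_sq_mulVec {n : Type*} [Fintype n] (M : Matrix n n ℂ) (e : n → ℂ) :
    ((∑ i, ‖(M *ᵥ e) i‖ ^ 2 : ℝ) : ℂ) = trace (Mᴴ * M * vecMulVec e (star e)) := by
  have h : ((∑ i, ‖(M *ᵥ e) i‖ ^ 2 : ℝ) : ℂ) = star (M *ᵥ e) ⬝ᵥ (M *ᵥ e) := by
    push_cast
    simp_rw [dotProduct, Pi.star_apply, Complex.star_def, Complex.conj_mul']
  rw [h, mul_vecMulVec, trace_vecMulVec, star_mulVec, ← mulVec_mulVec,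
    dotProduct_comm _ (star e), dotProduct_mulVec (star e)]

lemma ofReal_residP {N : ℕ} (P : Matrix (Fin N) (Fin N) ℂ) (f : ℝ) :
    (residP P f : ℂ) =
      trace ((1 - P)ᴴ * (1 - P) * vecMulVec (eVec N f) (star (eVec N f))) := by
  rw [residP, ← ofReal_sum_norm_sq_mulVec, sub_mulVec, one_mulVec]

lemma two_mul_floor_mul_add_one_le {N : ℕ} (hN : 0 < N) {W : ℝ} (hW₀ : 0 ≤ W)
    (hW : W < 1 / 2) :
    2 * ⌊(N : ℝ) * W⌋₊ + 1 ≤ N := by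
  have h₁ : (⌊(N : ℝ) * W⌋₊ : ℝ) ≤ N * W := Nat.floor_le (by positivity)
  have h₂ : (N : ℝ) * W < N * (1 / 2) := mul_lt_mul_of_pos_left hW (by exact_mod_cast hN)
  have : (2 * ⌊(N : ℝ) * W⌋₊ : ℝ) < N := by linarith
  have : 2 * ⌊(N : ℝ) * W⌋₊ < N := by exact_mod_cast this
  omega

theorem stmt6_general (N : ℕ) (W : ℝ) (hW : W ∈ Set.Ioo (0 : ℝ) (1 / 2))
    (m : ℕ) (hm : m = ⌊(N : ℝ) * W⌋₊)
    (R : ℕ)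
    (V : Matrix (Fin (N - (2 * m + 1))) (Fin R) ℂ) (hV : Vᴴ * V = 1) :
    ((∫ f in (-W)..W,
        residP (Matrix.fromCols (Fmat N m) (Fbar N m * V) *
          (Matrix.fromCols (Fmat N m) (Fbar N m * V))ᴴ) f : ℝ) : ℂ)
      = Matrix.trace ((Fbar N m)ᴴ * prolateC N W * Fbar N m -
          V * Vᴴ * ((Fbar N m)ᴴ * prolateC N W * Fbar N m)) := by
  obtain rfl | hN := N.eq_zero_or_pos
  · simp [residP]
  have hmN : 2 * m + 1 ≤ N := hm ▸ two_mul_floor_mul_add_one_le hN hW.1.le hW.2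
  rw [← intervalIntegral.integral_ofReal]
  simp_rw [ofReal_residP, one_sub_fromCols_mul_conjTranspose
    (Fmat_mul_conjTranspose_add_Fbar_mul_conjTranspose hmN),
    conjTranspose_mul_self_of_isometry (Fbar_conjTranspose_mul_self hmN) hV]
  rw [integral_trace_mul_vecMulVec_eVec, Matrix.mul_assoc, trace_mul_comm, ← Matrix.mul_assoc,
    trace_mul_comm, Matrix.sub_mul, Matrix.one_mul]

/-- for `Q = [F_{N,W}  F̄_{N,W} V]`,
`∫_{−W}^{W} ‖e_f − QQ*e_f‖₂² df
  = trace(F̄* B F̄ − V V* F̄* B F̄)`. -/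
theorem stmt6 (N : ℕ) (W : ℝ) (hW : W ∈ Set.Ioo (0 : ℝ) (1 / 2))
    (m : ℕ) (hm : m = ⌊(N : ℝ) * W⌋₊)
    (R : ℕ) (hR : R ≤ N - (2 * m + 1))
    (V : Matrix (Fin (N - (2 * m + 1))) (Fin R) ℂ) (hV : Vᴴ * V = 1) :
    ((∫ f in (-W)..W,
        residP (Matrix.fromCols (Fmat N m) (Fbar N m * V) *
          (Matrix.fromCols (Fmat N m) (Fbar N m * V))ᴴ) f : ℝ) : ℂ)
      = Matrix.trace ((Fbar N m)ᴴ * prolateC N W * Fbar N m -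
          V * Vᴴ * ((Fbar N m)ᴴ * prolateC N W * Fbar N m)) :=
  stmt6_general N W hW m hm R V hV

end
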